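/- The odd renormalized Jacobi theta function admits the expansion Θ(z) = z · exp(-2 ∑_{k ≥ 2, k even} G_k z^k / k!) as a formal power series in z with coefficients in ℚ[[q]], where G_k(τ) = -B_k/(2k) + ∑_{n≥1} ∑_{d|n} d^{k-1} q^n are the renormalized Eisenstein series. -/

import Mathlib

/-!
`Θ` is `(e^{z/2} - e^{-z/2}) · exp(Lz)`, and the exponent on the right-hand side splits as `Lz`
(from the `q`-expansions of the `G_k`) plus `b = ∑_{k even ≥ 2} B_k z^k / (k · k!)` (from their
constant terms). So the claim reduces to the classical identity `e^{z/2} - e^{-z/2} = z · exp(b)`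
over `ℚ`. Writing the left side as `z · Q`, both `Q` and `exp(b)` solve `Y' = b' · Y` with
`Y(0) = 1`: for `Q` this is a rearrangement of `z / (e^z - 1) = ∑ B_k z^k / k!`. Over a
`ℚ`-algebra such an equation has a unique solution, which also gives `exp(f + g) = exp(f) · exp(g)`.
-/

noncomputable section

/-- The ring `ℚ[[q]]`. -/
abbrev A : Type := PowerSeries ℚ

/-- Formal exponential of a power series (intended for series with zero constant term). -/
def pexp {R : Type*} [CommRing R] [Algebra ℚ R] (f : PowerSeries R) : PowerSeries R :=
  PowerSeries.mk fun N =>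
    ∑ n ∈ Finset.range (N + 1), (n.factorial : ℚ)⁻¹ • PowerSeries.coeff N (f ^ n)

/-- The logarithm of the triple-product part of `Θ(z)`, namely
`log ∏_{m≥1} (1-pq^m)(1-p⁻¹q^m)/(1-q^m)² = -∑_{k≥1} (p^k + p^{-k} - 2)·q^k/(k(1-q^k))`
with `p = e^z`, expanded as a power series in `z` with coefficients in `ℚ[[q]]`. -/
def Lz : PowerSeries A :=
  PowerSeries.mk fun j =>
    PowerSeries.mk fun N =>
      -(j.factorial : ℚ)⁻¹ *
        ∑ d ∈ N.divisors, (d : ℚ)⁻¹ *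
          ((d : ℚ) ^ j + (-(d : ℚ)) ^ j - if j = 0 then 2 else 0)

/-- The prefactor `p^{1/2} - p^{-1/2} = e^{z/2} - e^{-z/2}` as a power series in `z`. -/
def Pz : PowerSeries A :=
  PowerSeries.mk fun j =>
    PowerSeries.C (((2 : ℚ)⁻¹) ^ j * (j.factorial : ℚ)⁻¹ * (1 - (-1 : ℚ) ^ j))

/-- The odd renormalized Jacobi theta function
`Θ(z) = (p^{1/2}-p^{-1/2}) ∏_{m≥1} (1-pq^m)(1-p^{-1}q^m)/(1-q^m)²` with `p = e^z`,
as a power series in `z` with coefficients in `ℚ[[q]]`. -/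
def Theta : PowerSeries A := Pz * pexp Lz

/-- The renormalized Eisenstein series `G_k = -B_k/(2k) + ∑_{n≥1} ∑_{d|n} d^{k-1} q^n`. -/
def G (k : ℕ) : A :=
  PowerSeries.mk fun n =>
    if n = 0 then -bernoulli k / (2 * k) else ∑ d ∈ n.divisors, (d : ℚ) ^ (k - 1)

open PowerSeries Finset

section ExpOfSeries

variable {R : Type*} [CommRing R]

lemma coeff_pow_eq_zero_of_lt {f : R⟦X⟧} (hf : constantCoeff f = 0) {N n : ℕ} (h : N < n) :
    coeff N (f ^ n) = 0 :=
  X_pow_dvd_iff.mp (pow_dvd_pow_of_dvd (X_dvd_iff.mpr hf) n) N h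

lemma derivative_rescale (a : R) (f : R⟦X⟧) :
    d⁄dX R (rescale a f) = C a * rescale a (d⁄dX R f) := by
  ext n
  rw [coeff_derivative, coeff_C_mul, coeff_rescale, coeff_rescale, coeff_derivative, pow_succ]
  ring

variable [Algebra ℚ R]

lemma coeff_pexp (f : R⟦X⟧) (N : ℕ) :
    coeff N (pexp f) = ∑ n ∈ range (N + 1), (n.factorial : ℚ)⁻¹ • coeff N (f ^ n) :=
  coeff_mk _ _

lemma constantCoeff_pexp (f : R⟦X⟧) : constantCoeff (pexp f) = 1 := by
  rw [← coeff_zero_eq_constantCoeff_apply, coeff_pexp]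
  simp

lemma pexp_eq_subst_exp {f : R⟦X⟧} (hf : constantCoeff f = 0) : pexp f = (exp R).subst f := by
  ext N
  rw [coeff_pexp, coeff_subst' (HasSubst.of_constantCoeff_zero' hf),
    finsum_eq_sum_of_support_subset (s := range (N + 1))]
  · refine sum_congr rfl fun n _ => ?_
    rw [coeff_exp, one_div, algebraMap_smul]
  · intro n hn
    rw [coe_range, Set.mem_Iio]
    by_contra h
    exact hn (by simp only [coeff_pow_eq_zero_of_lt hf (not_lt.mp h), smul_zero])

lemma derivative_pexp {f : R⟦X⟧} (hf : constantCoeff f = 0) :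
    d⁄dX R (pexp f) = d⁄dX R f * pexp f := by
  rw [pexp_eq_subst_exp hf, derivative_subst (HasSubst.of_constantCoeff_zero' hf),
    derivative_exp, mul_comm]

lemma eq_of_derivative_eq_mul {w F₁ F₂ : R⟦X⟧} (h₁ : d⁄dX R F₁ = w * F₁)
    (h₂ : d⁄dX R F₂ = w * F₂) (h0 : constantCoeff F₁ = constantCoeff F₂) : F₁ = F₂ := by
  ext n
  induction n using Nat.strong_induction_on with
  | _ n ih =>
    cases n with
    | zero => simpa using h0
    | succ m =>
      have hm : coeff m (d⁄dX R F₁) = coeff m (d⁄dX R F₂) := by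
        rw [h₁, h₂, coeff_mul, coeff_mul]
        refine sum_congr rfl fun p hp => ?_
        rw [ih p.2 (by have := mem_antidiagonal.mp hp; omega)]
      rw [coeff_derivative, coeff_derivative] at hm
      have hu : IsUnit ((m : R) + 1) := by
        simpa using (Nat.cast_add_one_ne_zero m : ((m : ℚ) + 1) ≠ 0).isUnit.map (algebraMap ℚ R)
      exact hu.mul_right_cancel hm

lemma pexp_add {f g : R⟦X⟧} (hf : constantCoeff f = 0) (hg : constantCoeff g = 0) :
    pexp (f + g) = pexp f * pexp g := by
  refine eq_of_derivative_eq_mul (derivative_pexp (by simp [hf, hg])) ?_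
    (by simp [constantCoeff_pexp])
  rw [Derivation.leibniz, smul_eq_mul, smul_eq_mul, derivative_pexp hf, derivative_pexp hg,
    map_add]
  ring

lemma map_pexp {S : Type*} [CommRing S] [Algebra ℚ S] (φ : R →+* S) (f : R⟦X⟧) :
    map φ (pexp f) = pexp (map φ f) := by
  ext N
  simp [coeff_pexp, ← map_pow, map_rat_smul]

end ExpOfSeries

section SinhHalf

/-- The series of `log ((e^{X/2} - e^{-X/2}) / X)`. -/
def bernoulliLog : ℚ⟦X⟧ :=
  mk fun k => if 2 ≤ k ∧ Even k then bernoulli k / (k * k.factorial) else 0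

def twoSinhHalf : ℚ⟦X⟧ := rescale 2⁻¹ (exp ℚ) - rescale (-2⁻¹) (exp ℚ)

lemma constantCoeff_bernoulliLog : constantCoeff bernoulliLog = 0 := by
  rw [← coeff_zero_eq_constantCoeff_apply, bernoulliLog, coeff_mk]
  norm_num

lemma X_mul_derivative_bernoulliLog :
    X * d⁄dX ℚ bernoulliLog = bernoulliPowerSeries ℚ + C 2⁻¹ * X - 1 := by
  ext n
  rcases n with _ | n
  · rw [coeff_zero_eq_constantCoeff_apply, map_mul, constantCoeff_X, zero_mul]
    simp [bernoulliPowerSeries]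
  rw [coeff_succ_X_mul, coeff_derivative, bernoulliLog, coeff_mk]
  rcases n with _ | m
  · simp [bernoulliPowerSeries, bernoulli_one]
    norm_num
  simp only [bernoulliPowerSeries, coeff_mk, map_add, map_sub, coeff_C_mul, coeff_X, coeff_one,
    Algebra.algebraMap_self, RingHom.id_apply, if_neg (show m + 2 ≠ 1 by omega),
    if_neg (show m + 2 ≠ 0 by omega), mul_zero, add_zero, sub_zero]
  by_cases he : Even (m + 2)
  · rw [if_pos ⟨by omega, he⟩]
    field_simp
    push_cast
    ring
  · rw [if_neg (by tauto), zero_mul,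
      bernoulli_eq_zero_of_odd (Nat.not_even_iff_odd.mp he) (by omega)]
    simp

lemma X_mul_derivative_twoSinhHalf :
    X * d⁄dX ℚ twoSinhHalf = twoSinhHalf * (bernoulliPowerSeries ℚ + C 2⁻¹ * X) := by
  set p := rescale (2⁻¹ : ℚ) (exp ℚ)
  set q := rescale (-2⁻¹ : ℚ) (exp ℚ)
  have hpq : p * q = 1 := by simp [p, q, exp_mul_exp_eq_exp_add]
  have hpp : p * p = exp ℚ := by norm_num [p, exp_mul_exp_eq_exp_add]
  have hp : p ≠ 0 := left_ne_zero_of_mul_eq_one hpq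
  have hd : d⁄dX ℚ (p - q) = C 2⁻¹ * (p + q) := by
    simp only [p, q, map_sub, derivative_rescale, derivative_exp, map_neg]
    ring
  have h2 : C (2⁻¹ : ℚ) * 2 = 1 := by rw [← map_ofNat C 2, ← map_mul]; norm_num
  rw [twoSinhHalf, hd]
  -- after multiplying by `p = e^{X/2}`, the factor `p - q` becomes `e^X - 1`
  apply mul_right_cancel₀ hp
  linear_combination (X * C (2⁻¹ : ℚ) - bernoulliPowerSeries ℚ - C (2⁻¹ : ℚ) * X) * hpp +
    (X * C (2⁻¹ : ℚ) + bernoulliPowerSeries ℚ + C (2⁻¹ : ℚ) * X) * hpq -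
    bernoulliPowerSeries_mul_exp_sub_one ℚ + X * h2

lemma twoSinhHalf_eq_X_mul_pexp : twoSinhHalf = X * pexp bernoulliLog := by
  obtain ⟨Q, hQ⟩ : X ∣ twoSinhHalf := X_dvd_iff.mpr (by
    rw [← coeff_zero_eq_constantCoeff_apply, twoSinhHalf, map_sub, coeff_rescale, coeff_rescale]
    simp)
  suffices Q = pexp bernoulliLog by rw [hQ, this]
  have hQ' : X ^ 2 * d⁄dX ℚ Q = X ^ 2 * (d⁄dX ℚ bernoulliLog * Q) := by
    have h := X_mul_derivative_twoSinhHalf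
    rw [hQ, Derivation.leibniz, smul_eq_mul, smul_eq_mul, derivative_X] at h
    linear_combination h - X * Q * X_mul_derivative_bernoulliLog
  refine eq_of_derivative_eq_mul (mul_left_cancel₀ (pow_ne_zero 2 X_ne_zero) hQ')
    (derivative_pexp constantCoeff_bernoulliLog) ?_
  rw [constantCoeff_pexp, ← coeff_zero_eq_constantCoeff_apply, ← coeff_succ_X_mul, ← hQ]
  norm_num [twoSinhHalf]

end SinhHalf

section Eisenstein

lemma Pz_eq_map_twoSinhHalf : Pz = map (algebraMap ℚ A) twoSinhHalf := by
  ext1 j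
  rw [Pz, coeff_mk, coeff_map, twoSinhHalf, map_sub, coeff_rescale, coeff_rescale, coeff_exp,
    PowerSeries.algebraMap_apply]
  simp only [Algebra.algebraMap_self, RingHom.id_apply]
  congr 1
  rw [neg_pow (2⁻¹ : ℚ)]
  ring

lemma coeff_Lz_eq_zero {k : ℕ} (hk : ¬(2 ≤ k ∧ Even k)) : coeff k Lz = 0 := by
  have h : ∀ d : ℚ, d ^ k + (-d) ^ k - (if k = 0 then 2 else 0) = 0 := by
    rcases Nat.even_or_odd k with he | ho
    · obtain rfl : k = 0 := by
        by_contra hk0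
        exact hk ⟨by rcases he with ⟨t, rfl⟩; omega, he⟩
      intro d
      norm_num
    · intro d
      rw [ho.neg_pow, if_neg (by rintro rfl; exact Nat.not_odd_zero ho)]
      ring
  ext N
  simp [Lz, h]

lemma constantCoeff_Lz : constantCoeff Lz = 0 := by
  rw [← coeff_zero_eq_constantCoeff_apply, coeff_Lz_eq_zero (by omega)]

lemma smul_G_eq_C_add_coeff_Lz {k : ℕ} (hk : 2 ≤ k) (he : Even k) :
    ((-2 : ℚ) * (k.factorial : ℚ)⁻¹) • G k = C (bernoulli k / (k * k.factorial)) + coeff k Lz := by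
  ext N
  rw [coeff_smul, G, Lz, coeff_mk, map_add, coeff_C, coeff_mk, coeff_mk, smul_eq_mul]
  rcases N with _ | N
  · simp only [↓reduceIte, Nat.divisors_zero, sum_empty, mul_zero, add_zero]
    field_simp
  have hsum : ∀ d ∈ (N + 1).divisors,
      (d : ℚ)⁻¹ * ((d : ℚ) ^ k + (-(d : ℚ)) ^ k - if k = 0 then 2 else 0) =
        2 * (d : ℚ) ^ (k - 1) := by
    intro d hd
    have hd0 : (d : ℚ) ≠ 0 := by exact_mod_cast (Nat.pos_of_mem_divisors hd).ne'
    rw [he.neg_pow, if_neg (by omega), sub_zero, ← Nat.sub_add_cancel (by omega : 1 ≤ k), pow_succ]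
    field_simp
    rw [Nat.add_sub_cancel]
    ring
  rw [if_neg N.succ_ne_zero, if_neg N.succ_ne_zero, zero_add, sum_congr rfl hsum, ← mul_sum]
  ring

lemma exponent_eq_map_bernoulliLog_add_Lz :
    (mk fun k => if 2 ≤ k ∧ Even k then ((-2 : ℚ) * (k.factorial : ℚ)⁻¹) • G k else 0) =
      map (algebraMap ℚ A) bernoulliLog + Lz := by
  ext1 k
  rw [coeff_mk, map_add, coeff_map, bernoulliLog, coeff_mk]
  split_ifs with hk
  · rw [smul_G_eq_C_add_coeff_Lz hk.1 hk.2]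
    rfl
  · rw [coeff_Lz_eq_zero hk, map_zero, add_zero]

end Eisenstein

/-- **Equation (2.2).** `Θ(z) = z · exp(-2 ∑_{k ≥ 2 even} G_k z^k / k!)`. -/
theorem stmt10 :
    Theta = PowerSeries.X *
      pexp (PowerSeries.mk fun k =>
        if 2 ≤ k ∧ Even k then ((-2 : ℚ) * (k.factorial : ℚ)⁻¹) • G k else 0) := by
  rw [exponent_eq_map_bernoulliLog_add_Lz,
    pexp_add (by rw [← coeff_zero_eq_constantCoeff_apply, coeff_map]; simp [bernoulliLog])
      constantCoeff_Lz,
    Theta, Pz_eq_map_twoSinhHalf, twoSinhHalf_eq_X_mul_pexp, map_mul, map_X, map_pexp]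
  ring

end
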